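/- In ℂ(x)[∂], the operator L = ∂³ − (6/x²)∂ + 12/x³ + h commutes with A1 = ∂⁴ − (8/x²)∂² + (24/x³)∂ − 24/x⁴ for every complex constant h. -/

import Mathlib

/-!
The quotient-rule map `ratD` is a `ℂ`-derivation of `ℂ(x)` with `x' = 1`. For any derivation `D`
of a field with an element `x` satisfying `D x = 1`, the Leibniz rule and `D (x⁻¹ ^ n) =
-n x⁻¹ ^ (n + 1)` expand both `L ∘ A₁` and `A₁ ∘ L` into combinations of `x⁻¹ ^ i * D^[j] f`,
and the coefficients agree.
-/

open RatFunc

/-- The derivation `d/dx` on the differential field `ℂ(x)` of rational functions,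
given by the quotient rule on the (coprime) numerator and denominator. -/
noncomputable def ratD (f : RatFunc ℂ) : RatFunc ℂ :=
  (algebraMap (Polynomial ℂ) (RatFunc ℂ) (Polynomial.derivative f.num)
      * algebraMap (Polynomial ℂ) (RatFunc ℂ) f.denom
    - algebraMap (Polynomial ℂ) (RatFunc ℂ) f.num
      * algebraMap (Polynomial ℂ) (RatFunc ℂ) (Polynomial.derivative f.denom))
    / algebraMap (Polynomial ℂ) (RatFunc ℂ) f.denom ^ 2


/-- The operator `L = ∂³ - (6/x²)∂ + 12/x³ + h`, acting on `ℂ(x)`. -/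
noncomputable def opL (h : ℂ) (f : RatFunc ℂ) : RatFunc ℂ :=
  ratD^[3] f - 6 / X ^ 2 * ratD f + (12 / X ^ 3 + RatFunc.C h) * f

/-- The operator `A₁ = ∂⁴ - (8/x²)∂² + (24/x³)∂ - 24/x⁴`. -/
noncomputable def opA1 (f : RatFunc ℂ) : RatFunc ℂ :=
  ratD^[4] f - 8 / X ^ 2 * ratD^[2] f + 24 / X ^ 3 * ratD f - 24 / X ^ 4 * f

namespace Derivation

variable {k K : Type*} [CommRing k] [Field K] [Algebra k K] (D : Derivation k K K)

theorem map_ofNat (n : ℕ) [n.AtLeastTwo] : D (no_index (OfNat.ofNat n : K)) = 0 :=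
  D.map_natCast n

theorem map_inv_pow_of_map_eq_one {x : K} (hx : D x = 1) (n : ℕ) :
    D (x⁻¹ ^ n) = -(n * x⁻¹ ^ (n + 1)) := by
  rw [leibniz_pow, leibniz_inv, hx]
  rcases n with _ | n
  · simp
  · simp only [smul_eq_mul, nsmul_eq_mul]
    push_cast
    ring

variable (x : K)

noncomputable def operatorL (h : k) (f : K) : K :=
  D^[3] f - 6 / x ^ 2 * D f + (12 / x ^ 3 + algebraMap k K h) * f

noncomputable def operatorA1 (f : K) : K :=
  D^[4] f - 8 / x ^ 2 * D^[2] f + 24 / x ^ 3 * D f - 24 / x ^ 4 * f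

variable {x}

theorem operatorL_operatorA1_comm (hx : D x = 1) (h : k) (f : K) :
    D.operatorL x h (D.operatorA1 x f) = D.operatorA1 x (D.operatorL x h f) := by
  simp only [operatorL, operatorA1, Function.iterate_succ_apply', Function.iterate_zero_apply,
    div_eq_mul_inv, ← inv_pow]
  simp only [Derivation.map_sub, Derivation.map_add, Derivation.map_neg, Derivation.map_zero,
    leibniz, D.map_inv_pow_of_map_eq_one hx, Derivation.map_natCast, Derivation.map_ofNat,
    map_algebraMap, smul_eq_mul]
  push_cast
  ring

end Derivation

open Polynomial (derivative derivative_mul)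
open scoped Polynomial

local notation "ι" => algebraMap ℂ[X] (RatFunc ℂ)

theorem ratD_div_algebraMap (p q : ℂ[X]) (hq : q ≠ 0) :
    ratD (ι p / ι q) = (ι (derivative p) * ι q - ι p * ι (derivative q)) / ι q ^ 2 := by
  set f := ι p / ι q
  have hd : f.denom ≠ 0 := f.denom_ne_zero
  have hcross : f.num * q = p * f.denom := by
    apply algebraMap_injective ℂ
    have hf : ι f.num / ι f.denom = ι p / ι q := f.num_div_denom
    rw [div_eq_div_iff (algebraMap_ne_zero hd) (algebraMap_ne_zero hq)] at hf
    simpa using hf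
  have hcross' : derivative f.num * q + f.num * derivative q =
      derivative p * f.denom + p * derivative f.denom := by
    simpa [derivative_mul] using congrArg derivative hcross
  rw [ratD, div_eq_div_iff (pow_ne_zero 2 (algebraMap_ne_zero hd))
    (pow_ne_zero 2 (algebraMap_ne_zero hq))]
  simp only [← map_pow, ← map_mul, ← map_sub]
  refine congrArg _ ?_
  linear_combination (q * f.denom) * hcross' -
    (derivative q * f.denom + q * derivative f.denom) * hcross

theorem ratD_algebraMap (p : ℂ[X]) : ratD (ι p) = ι (derivative p) := by
  simpa using ratD_div_algebraMap p 1 one_ne_zero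

theorem ratD_add (f g : RatFunc ℂ) : ratD (f + g) = ratD f + ratD g := by
  have hf := f.denom_ne_zero
  have hg := g.denom_ne_zero
  rw [← f.num_div_denom, ← g.num_div_denom]
  generalize f.num = p₁, f.denom = q₁, g.num = p₂, g.denom = q₂ at *
  have hf' := algebraMap_ne_zero hf
  have hg' := algebraMap_ne_zero hg
  rw [div_add_div _ _ hf' hg', ← map_mul, ← map_mul, ← map_mul, ← map_add,
    ratD_div_algebraMap _ _ (mul_ne_zero hf hg), ratD_div_algebraMap _ _ hf,
    ratD_div_algebraMap _ _ hg]
  simp only [derivative_mul, map_add, map_mul]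
  field_simp
  ring

theorem ratD_mul (f g : RatFunc ℂ) : ratD (f * g) = f * ratD g + g * ratD f := by
  have hf := f.denom_ne_zero
  have hg := g.denom_ne_zero
  rw [← f.num_div_denom, ← g.num_div_denom]
  generalize f.num = p₁, f.denom = q₁, g.num = p₂, g.denom = q₂ at *
  have hf' := algebraMap_ne_zero hf
  have hg' := algebraMap_ne_zero hg
  rw [div_mul_div_comm, ← map_mul, ← map_mul, ratD_div_algebraMap _ _ (mul_ne_zero hf hg),
    ratD_div_algebraMap _ _ hf, ratD_div_algebraMap _ _ hg]
  simp only [derivative_mul, map_add, map_mul]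
  field_simp
  ring

theorem ratD_C (c : ℂ) : ratD (C c) = 0 := by
  rw [← algebraMap_C, ratD_algebraMap, Polynomial.derivative_C, map_zero]

theorem ratD_X : ratD X = 1 := by
  rw [← algebraMap_X, ratD_algebraMap, Polynomial.derivative_X, map_one]

noncomputable def ratDerivation : Derivation ℂ (RatFunc ℂ) (RatFunc ℂ) :=
  Derivation.mk'
    { toFun := ratD
      map_add' := ratD_add
      map_smul' := fun c f => by
        rw [RingHom.id_apply, smul_eq_C_mul, ratD_mul, ratD_C, mul_zero, add_zero,
          smul_eq_C_mul] }
    ratD_mul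

/-- `L` and `A₁` commute in `ℂ(x)[∂]`. -/
theorem stmt4 (h : ℂ) : ∀ f : RatFunc ℂ, opL h (opA1 f) = opA1 (opL h f) :=
  ratDerivation.operatorL_operatorA1_comm (x := X) ratD_X h
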